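/- Let μ be a centred probability measure on ℝ with distribution function F, b < 0 < b̄, and let ξ ∈ (F(b),1] satisfy ∫(x−b) dμ_{F(b)}^ξ = −b. Then the measure σ = (μ^{F(b)} + μ_ξ)/(F(b) + 1 − ξ) is a probability measure with barycentre b, i.e. ∫(x−b)(μ^{F(b)} + μ_ξ)(dx) = 0. -/

import Mathlib

open MeasureTheory Set

/-- Distribution function of `μ`. -/
noncomputable def distF (μ : Measure ℝ) (x : ℝ) : ℝ := (μ (Iic x)).toReal

/-- Left limit `F(x-)` of the distribution function. -/
noncomputable def distFm (μ : Measure ℝ) (x : ℝ) : ℝ := (μ (Iio x)).toReal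

/-- Quantile function of `μ`. -/
noncomputable def quantile (μ : Measure ℝ) (u : ℝ) : ℝ :=
  sInf {x : ℝ | u ≤ distF μ x}

/-- The sub-probability measure `μ_p^q`, i.e. `μ` restricted to its quantile range `(p,q]`,
realised as the image under the quantile function of Lebesgue measure on `(p,q]`. -/
noncomputable def qmeas (μ : Measure ℝ) (p q : ℝ) : Measure ℝ :=
  (volume.restrict (Ioc p q)).map (quantile μ)

/-- `m̃_p^q = ∫ x dμ_p^q`. -/
noncomputable def mtil (μ : Measure ℝ) (p q : ℝ) : ℝ :=
  ∫ u in Ioc p q, quantile μ u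

/-- The barycentre `m_p^q` of `μ` restricted to the quantile range `(p,q]`. -/
noncomputable def bary (μ : Measure ℝ) (p q : ℝ) : ℝ :=
  if p < q then (q - p)⁻¹ * mtil μ p q else quantile μ q

/-! Since `Q u ≤ x ↔ u ≤ F x` for `u ∈ (0,1)`, the quantile function `Q` pushes Lebesgue measure
on `(0,1]` forward to `μ`, so `∫ (x - b) dμ_p^q = ∫_p^q (Q u - b) du`. Splitting
`-b = ∫ (x - b) dμ = ∫_0^1 (Q u - b) du` over `(0,F(b)] ∪ (F(b),ξ] ∪ (ξ,1]`, the middle piece is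
`-b` by the choice of `ξ`, so the outer two pieces sum to `0`. -/

open ProbabilityTheory

section Quantile

variable (μ : Measure ℝ) [IsProbabilityMeasure μ]

lemma distF_eq_cdf (x : ℝ) : distF μ x = cdf μ x := (cdf_eq_real μ x).symm

lemma quantile_le_iff {u : ℝ} (hu : u ∈ Ioo 0 1) (x : ℝ) :
    quantile μ u ≤ x ↔ u ≤ distF μ x := by
  simp only [quantile, distF_eq_cdf]
  set S := {y : ℝ | u ≤ cdf μ y}
  have hne : S.Nonempty :=
    (((tendsto_cdf_atTop μ).eventually_const_lt hu.2).mono fun _ h => h.le).exists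
  have hbdd : BddBelow S := by
    obtain ⟨y, hy⟩ := ((tendsto_cdf_atBot μ).eventually_lt_const hu.1).exists
    exact ⟨y, fun z hz => le_of_not_gt fun hzy => (hz.trans (monotone_cdf μ hzy.le)).not_gt hy⟩
  -- `S` contains its infimum by right continuity of the distribution function
  have hmem : u ≤ cdf μ (sInf S) := by
    refine ge_of_tendsto (((cdf μ).right_continuous _).mono Ioi_subset_Ici_self).tendsto ?_
    refine eventually_nhdsWithin_of_forall fun y hy => ?_
    obtain ⟨z, hzS, hzy⟩ := exists_lt_of_csInf_lt hne hy
    exact hzS.trans (monotone_cdf μ hzy.le)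
  exact ⟨fun h => hmem.trans (monotone_cdf μ h), fun h => csInf_le hbdd h⟩

lemma monotoneOn_quantile : MonotoneOn (quantile μ) (Ioo 0 1) := fun _ hu _ hv huv =>
  (quantile_le_iff μ hu _).2 (huv.trans ((quantile_le_iff μ hv _).1 le_rfl))

variable {μ} {p q : ℝ}

lemma aemeasurable_quantile (hp : 0 ≤ p) (hq : q ≤ 1) :
    AEMeasurable (quantile μ) (volume.restrict (Ioc p q)) := by
  rw [← Measure.restrict_congr_set Ioo_ae_eq_Ioc]
  exact aemeasurable_restrict_of_monotoneOn measurableSet_Ioo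
    ((monotoneOn_quantile μ).mono (Ioo_subset_Ioo hp hq))

lemma qmeas_univ (hp : 0 ≤ p) (hq : q ≤ 1) : qmeas μ p q univ = ENNReal.ofReal (q - p) := by
  rw [qmeas, Measure.map_apply_of_aemeasurable (aemeasurable_quantile hp hq) MeasurableSet.univ,
    preimage_univ, Measure.restrict_apply_univ, Real.volume_Ioc]

variable (μ) in
lemma qmeas_zero_one : qmeas μ 0 1 = μ := by
  refine (Measure.ext_of_Iic μ (qmeas μ 0 1) fun x => ?_).symm
  have hpre : quantile μ ⁻¹' Iic x ∩ Ioo 0 1 = Iic (distF μ x) ∩ Ioo 0 1 := by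
    ext u
    exact and_congr_left (quantile_le_iff μ · x)
  have hF : distF μ x ≤ 1 := (distF_eq_cdf μ x).trans_le (cdf_le_one μ x)
  rw [qmeas, Measure.map_apply_of_aemeasurable (aemeasurable_quantile le_rfl le_rfl)
      measurableSet_Iic, ← Measure.restrict_congr_set Ioo_ae_eq_Ioc,
    Measure.restrict_apply' measurableSet_Ioo, hpre,
    measure_congr (ae_eq_set_inter (ae_eq_refl (Iic (distF μ x))) (Ioo_ae_eq_Ioc (μ := volume))),
    inter_comm, Ioc_inter_Iic, min_eq_right hF, Real.volume_Ioc, sub_zero, distF_eq_cdf, ofReal_cdf]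

lemma integral_qmeas (hp : 0 ≤ p) (hq : q ≤ 1) {f : ℝ → ℝ}
    (hf : AEStronglyMeasurable f (qmeas μ p q)) :
    ∫ x, f x ∂qmeas μ p q = ∫ u in Ioc p q, f (quantile μ u) :=
  integral_map (aemeasurable_quantile hp hq) hf

lemma integrable_qmeas_iff (hp : 0 ≤ p) (hq : q ≤ 1) {f : ℝ → ℝ}
    (hf : AEStronglyMeasurable f (qmeas μ p q)) :
    Integrable f (qmeas μ p q) ↔ IntegrableOn (f ∘ quantile μ) (Ioc p q) :=
  integrable_map_measure hf (aemeasurable_quantile hp hq)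

lemma intervalIntegrable_quantile (hint : Integrable id μ) (hp : p ∈ Icc 0 1)
    (hq : q ∈ Icc 0 1) :
    IntervalIntegrable (quantile μ) volume p q := by
  rw [← qmeas_zero_one μ, integrable_qmeas_iff le_rfl le_rfl aestronglyMeasurable_id] at hint
  have h01 : IntervalIntegrable (quantile μ) volume 0 1 :=
    (intervalIntegrable_iff_integrableOn_Ioc_of_le zero_le_one).2 hint
  exact h01.mono_set (uIcc_subset_uIcc (by simpa using hp) (by simpa using hq))

lemma integral_sub_qmeas (hp : 0 ≤ p) (hpq : p ≤ q) (hq : q ≤ 1) (c : ℝ) :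
    ∫ x, (x - c) ∂qmeas μ p q = ∫ u in p..q, (quantile μ u - c) := by
  rw [integral_qmeas hp hq (by fun_prop), intervalIntegral.integral_of_le hpq]

lemma integrable_sub_qmeas (hint : Integrable id μ) (hp : 0 ≤ p) (hpq : p ≤ q) (hq : q ≤ 1)
    (c : ℝ) : Integrable (fun x => x - c) (qmeas μ p q) := by
  rw [integrable_qmeas_iff hp hq (by fun_prop),
    ← intervalIntegrable_iff_integrableOn_Ioc_of_le hpq]
  exact (intervalIntegrable_quantile hint ⟨hp, hpq.trans hq⟩ ⟨hp.trans hpq, hq⟩).sub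
    intervalIntegrable_const

lemma integral_quantile_sub (hint : Integrable id μ) (c : ℝ) :
    ∫ u in (0 : ℝ)..1, (quantile μ u - c) = ∫ x, x ∂μ - c := by
  rw [← integral_sub_qmeas le_rfl zero_le_one le_rfl, qmeas_zero_one,
    integral_sub (f := fun x => x) hint (integrable_const c), integral_const, probReal_univ,
    one_smul]

lemma integral_sub_qmeas_add_qmeas (hint : Integrable id μ) {r : ℝ} (hp : 0 ≤ p) (hpr : p ≤ r)
    (hr : r ≤ 1) (c : ℝ) :
    ∫ x, (x - c) ∂(qmeas μ 0 p + qmeas μ r 1) =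
      ∫ x, x ∂μ - c - ∫ u in Ioc p r, (quantile μ u - c) := by
  have hg {s t : ℝ} (hs : s ∈ Icc 0 1) (ht : t ∈ Icc 0 1) :
      IntervalIntegrable (fun u => quantile μ u - c) volume s t :=
    (intervalIntegrable_quantile hint hs ht).sub intervalIntegrable_const
  have h0 : (0 : ℝ) ∈ Icc 0 1 := ⟨le_rfl, zero_le_one⟩
  have h1 : (1 : ℝ) ∈ Icc 0 1 := ⟨zero_le_one, le_rfl⟩
  have hpI : p ∈ Icc 0 1 := ⟨hp, hpr.trans hr⟩
  have hrI : r ∈ Icc 0 1 := ⟨hp.trans hpr, hr⟩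
  rw [integral_add_measure (integrable_sub_qmeas hint le_rfl hp hpI.2 c)
      (integrable_sub_qmeas hint hrI.1 hr le_rfl c), integral_sub_qmeas le_rfl hp hpI.2,
    integral_sub_qmeas hrI.1 hr le_rfl, ← intervalIntegral.integral_of_le hpr,
    ← integral_quantile_sub hint c,
    ← intervalIntegral.integral_add_adjacent_intervals (hg h0 hpI) (hg hpI h1),
    ← intervalIntegral.integral_add_adjacent_intervals (hg hpI hrI) (hg hrI h1)]
  ring

end Quantile

theorem stmt11_general (μ : Measure ℝ) [IsProbabilityMeasure μ]
    (hint : Integrable id μ) (hcent : ∫ x, x ∂μ = 0)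
    (lb : ℝ)
    (ξ : ℝ) (hξ : ξ ∈ Ioc (distF μ lb) 1)
    (hξeq : (∫ u in Ioc (distF μ lb) ξ, (quantile μ u - lb)) = -lb)
    (hpos : 0 < distF μ lb + 1 - ξ) :
    IsProbabilityMeasure
      ((ENNReal.ofReal (distF μ lb + 1 - ξ))⁻¹ •
        (qmeas μ 0 (distF μ lb) + qmeas μ ξ 1)) ∧
    (∫ x, (x - lb) ∂(qmeas μ 0 (distF μ lb) + qmeas μ ξ 1)) = 0 := by
  obtain ⟨hFξ, hξ1⟩ := hξ
  set F := distF μ lb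
  have hF0 : 0 ≤ F := ENNReal.toReal_nonneg
  have hF1 : F ≤ 1 := hFξ.le.trans hξ1
  have hξ0 : 0 ≤ ξ := hF0.trans hFξ.le
  refine ⟨⟨?_⟩, ?_⟩
  · rw [Measure.smul_apply, Measure.add_apply, qmeas_univ le_rfl hF1, qmeas_univ hξ0 le_rfl,
      ← ENNReal.ofReal_add (by linarith) (by linarith), smul_eq_mul, sub_zero, ← add_sub_assoc]
    exact ENNReal.inv_mul_cancel (by simpa using hpos) ENNReal.ofReal_ne_top
  · rw [integral_sub_qmeas_add_qmeas hint hF0 hFξ.le hξ1, hξeq, hcent]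
    ring

theorem stmt11 (μ : Measure ℝ) [IsProbabilityMeasure μ]
    (hint : Integrable id μ) (hcent : ∫ x, x ∂μ = 0)
    (lb ub : ℝ) (hlb : lb < 0) (hub : 0 < ub)
    (ξ : ℝ) (hξ : ξ ∈ Ioc (distF μ lb) 1)
    (hξeq : (∫ u in Ioc (distF μ lb) ξ, (quantile μ u - lb)) = -lb)
    (hpos : 0 < distF μ lb + 1 - ξ) :
    IsProbabilityMeasure
      ((ENNReal.ofReal (distF μ lb + 1 - ξ))⁻¹ •
        (qmeas μ 0 (distF μ lb) + qmeas μ ξ 1)) ∧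
    (∫ x, (x - lb) ∂(qmeas μ 0 (distF μ lb) + qmeas μ ξ 1)) = 0 :=
  stmt11_general μ hint hcent lb ξ hξ hξeq hpos
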